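/- In the discrete-time voter model on a finite connected graph G, for any initial distribution μ on colorings, the geometric decay rate λ_V(G,μ) = lim_{t→∞} P_μ(τ > t)^{1/t} of the consensus time satisfies λ_V(G,μ) ≤ λ_CRW(G), where λ_CRW(G) is the geometric decay rate of the coalescence time of the system of coalescing lazy random walks on G. Equality holds if with positive probability all initial opinions are distinct. -/

import Mathlib

open Filter Topology Matrix

variable {V : Type*} [Fintype V] [DecidableEq V]

/-- One-step transition probability of the discrete-time voter model on a finite graph `G`. -/
noncomputable def voterStep (G : SimpleGraph V) [DecidableRel G.Adj]
    (η η' : V → ℕ) : ℝ :=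
  (1 / (Fintype.card V : ℝ)) * ∑ v : V, ∑ u ∈ G.neighborFinset v,
    ((if η' v = η u then (1 : ℝ) else 0) / (G.degree v : ℝ)) *
      ∏ w ∈ Finset.univ.erase v, (if η' w = η w then (1 : ℝ) else 0)

/-- `t`-step transition probability of the voter model. -/
noncomputable def voterProb (G : SimpleGraph V) [DecidableRel G.Adj] :
    ℕ → (V → ℕ) → (V → ℕ) → ℝ
  | 0, η, η' => if η = η' then 1 else 0
  | t + 1, η, η'' => ∑' η' : V → ℕ, voterStep G η η' * voterProb G t η' η''

/-- `P_η(τ > t)`: probability that the voter model from `η` has no consensus by time `t`. -/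
noncomputable def voterSurvival (G : SimpleGraph V) [DecidableRel G.Adj]
    (t : ℕ) (η : V → ℕ) : ℝ :=
  ∑' η' : V → ℕ, if ∀ v w : V, η' v = η' w then 0 else voterProb G t η η'

/-- Transition matrix of the dual system of coalescing lazy random walks on `G`: a state is
a map `f : V → V` recording the position of the walker started at each vertex; a uniform
vertex `v` and uniform neighbor `u` are chosen and all walkers at `v` move to `u`. -/
noncomputable def crwMatrix (G : SimpleGraph V) [DecidableRel G.Adj] :
    Matrix (V → V) (V → V) ℝ := fun f g =>
  (1 / (Fintype.card V : ℝ)) * ∑ v : V, ∑ u ∈ G.neighborFinset v,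
    (1 / (G.degree v : ℝ)) *
      (if g = (fun w => if f w = v then u else f w) then 1 else 0)

/-- `P(σ > n)`: probability that the coalescing random walks started from one walker at
each vertex have not fully coalesced by time `n`. -/
noncomputable def crwSurvival (G : SimpleGraph V) [DecidableRel G.Adj] (n : ℕ) : ℝ :=
  ∑ g : V → V, if ∀ v w : V, g v = g w then 0 else ((crwMatrix G) ^ n) id g

/-! Duality: after `t` steps the voter model started from `η` has the law of `η ∘ g`, where `g`
is the state at time `t` of the coalescing walks started from `id`, because a voter at `v` copying
its neighbour `u` is, read backwards in time, every walker at `v` jumping to `u`. A coalesced `g`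
forces a consensus `η ∘ g`, and for injective `η` the converse holds, so
`μ η₀ * P(σ > t) ≤ P_μ(τ > t) ≤ P(σ > t)`; the factor `μ η₀ ^ (1 / t)` tends to `1`. -/

theorem le_of_tendsto_rpow_one_div {a b : ℕ → ℝ} {α β : ℝ} (ha : ∀ t, 0 ≤ a t)
    (hab : ∀ t, a t ≤ b t) (hα : Tendsto (fun t : ℕ => a t ^ ((1 : ℝ) / t)) atTop (𝓝 α))
    (hβ : Tendsto (fun t : ℕ => b t ^ ((1 : ℝ) / t)) atTop (𝓝 β)) : α ≤ β :=
  le_of_tendsto_of_tendsto' hα hβ fun t => Real.rpow_le_rpow (ha t) (hab t) (by positivity)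

theorem tendsto_const_mul_rpow_one_div {b : ℕ → ℝ} {β c : ℝ} (hc : 0 < c) (hb : ∀ t, 0 ≤ b t)
    (hβ : Tendsto (fun t : ℕ => b t ^ ((1 : ℝ) / t)) atTop (𝓝 β)) :
    Tendsto (fun t : ℕ => (c * b t) ^ ((1 : ℝ) / t)) atTop (𝓝 β) := by
  have hc_pow : Tendsto (fun t : ℕ => c ^ ((1 : ℝ) / t)) atTop (𝓝 1) := by
    simpa [Function.comp_def] using ((Real.continuousAt_const_rpow hc.ne').tendsto).comp
      tendsto_one_div_atTop_nhds_zero_nat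
  simpa only [Real.mul_rpow hc.le (hb _), one_mul] using hc_pow.mul hβ

namespace CoalescingRandomWalks

variable (G : SimpleGraph V) [DecidableRel G.Adj]

def move (v u : V) (f : V → V) : V → V := fun w => if f w = v then u else f w

theorem update_comp_move {α β : Type*} [DecidableEq α] (η : α → β) (v u : α) (f : α → α) :
    Function.update η v (η u) ∘ f = η ∘ move v u f := by
  funext w
  simp only [Function.comp_apply, move, Function.update_apply, apply_ite η]

theorem crwMatrix_apply (f g : V → V) :
    crwMatrix G f g = (1 / (Fintype.card V : ℝ)) * ∑ v : V, ∑ u ∈ G.neighborFinset v,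
      (1 / (G.degree v : ℝ)) * (if g = move v u f then 1 else 0) := rfl

theorem crwMatrix_nonneg (f g : V → V) : 0 ≤ crwMatrix G f g := by
  rw [crwMatrix_apply]; positivity

theorem crwMatrix_pow_nonneg (n : ℕ) (f g : V → V) : 0 ≤ (crwMatrix G ^ n) f g :=
  Matrix.pow_apply_nonneg (crwMatrix_nonneg G) n f g

theorem crwMatrix_mulVec_apply (x : (V → V) → ℝ) (f : V → V) :
    (crwMatrix G *ᵥ x) f = (1 / (Fintype.card V : ℝ)) * ∑ v : V, ∑ u ∈ G.neighborFinset v,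
      (1 / (G.degree v : ℝ)) * x (move v u f) := by
  simp only [mulVec, dotProduct, crwMatrix_apply, Finset.sum_mul, Finset.mul_sum, mul_assoc]
  rw [Finset.sum_comm]
  refine Finset.sum_congr rfl fun v _ => ?_
  rw [Finset.sum_comm]
  refine Finset.sum_congr rfl fun u _ => ?_
  simp

theorem crwSurvival_nonneg (n : ℕ) : 0 ≤ crwSurvival G n :=
  Finset.sum_nonneg fun g _ => by
    split_ifs
    · exact le_rfl
    · exact crwMatrix_pow_nonneg G n id g

end CoalescingRandomWalks

namespace VoterModel

open CoalescingRandomWalks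

variable (G : SimpleGraph V) [DecidableRel G.Adj]

theorem voterStep_eq (η η' : V → ℕ) :
    voterStep G η η' = (1 / (Fintype.card V : ℝ)) * ∑ v : V, ∑ u ∈ G.neighborFinset v,
      (1 / (G.degree v : ℝ)) * (if η' = Function.update η v (η u) then 1 else 0) := by
  unfold voterStep
  congr 1
  refine Finset.sum_congr rfl fun v _ => Finset.sum_congr rfl fun u _ => ?_
  have hprod : (if η' v = η u then (1 : ℝ) else 0) *
      ∏ w ∈ Finset.univ.erase v, (if η' w = η w then (1 : ℝ) else 0) =
      if η' = Function.update η v (η u) then 1 else 0 := by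
    simp_rw [funext_iff, ← Fintype.prod_boole]
    convert Finset.mul_prod_erase Finset.univ
      (fun w => if η' w = Function.update η v (η u) w then (1 : ℝ) else 0) (Finset.mem_univ v)
      using 2
    · simp
    · refine Finset.prod_congr rfl fun w hw => ?_
      rw [Function.update_of_ne (Finset.ne_of_mem_erase hw)]
  rw [← hprod]
  ring

theorem voterProb_succ (t : ℕ) (η η'' : V → ℕ) :
    voterProb G (t + 1) η η'' = (1 / (Fintype.card V : ℝ)) * ∑ v : V,
      ∑ u ∈ G.neighborFinset v, (1 / (G.degree v : ℝ)) *
        voterProb G t (Function.update η v (η u)) η'' := by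
  have hterm (η' : V → ℕ) : voterStep G η η' * voterProb G t η' η'' =
      (1 / (Fintype.card V : ℝ)) * ∑ v : V, ∑ u ∈ G.neighborFinset v, (1 / (G.degree v : ℝ)) *
        (if η' = Function.update η v (η u) then voterProb G t (Function.update η v (η u)) η''
          else 0) := by
    simp only [voterStep_eq, Finset.sum_mul, mul_assoc, Finset.mul_sum]
    refine Finset.sum_congr rfl fun v _ => Finset.sum_congr rfl fun u _ => ?_
    split_ifs with h
    · rw [h, one_mul]
    · rw [zero_mul]
  refine HasSum.tsum_eq ?_
  simp_rw [hterm]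
  exact (hasSum_sum fun v _ => hasSum_sum fun u _ => (hasSum_ite_eq _ _).mul_left _).mul_left _

theorem crwMatrix_mulVec_eq_sum_update (η η'' : V → ℕ) :
    (crwMatrix G *ᵥ fun g => if η'' = η ∘ g then 1 else 0) =
      (1 / (Fintype.card V : ℝ)) • ∑ v : V, ∑ u ∈ G.neighborFinset v, (1 / (G.degree v : ℝ)) •
        fun g => if η'' = Function.update η v (η u) ∘ g then 1 else 0 := by
  funext f
  simp only [crwMatrix_mulVec_apply, update_comp_move, Pi.smul_apply, Finset.sum_apply, smul_eq_mul]

theorem voterProb_eq_crwMatrix_pow_mulVec (t : ℕ) (η η'' : V → ℕ) :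
    voterProb G t η η'' = (crwMatrix G ^ t *ᵥ fun g => if η'' = η ∘ g then 1 else 0) id := by
  induction t generalizing η with
  | zero => simp [voterProb, eq_comm]
  | succ t ih =>
    rw [voterProb_succ, pow_succ, ← mulVec_mulVec, crwMatrix_mulVec_eq_sum_update]
    simp only [mulVec_smul, mulVec_sum, Pi.smul_apply, Finset.sum_apply, smul_eq_mul, ih]

theorem tsum_voterProb_mul (t : ℕ) (η : V → ℕ) (Φ : (V → ℕ) → ℝ) :
    ∑' η', voterProb G t η η' * Φ η' = ∑ g : V → V, (crwMatrix G ^ t) id g * Φ (η ∘ g) := by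
  have hterm (η' : V → ℕ) : voterProb G t η η' * Φ η' =
      ∑ g : V → V, if η' = η ∘ g then (crwMatrix G ^ t) id g * Φ (η ∘ g) else 0 := by
    rw [voterProb_eq_crwMatrix_pow_mulVec, mulVec, dotProduct, Finset.sum_mul]
    refine Finset.sum_congr rfl fun g _ => ?_
    split_ifs with h
    · rw [h, mul_one]
    · rw [mul_zero, zero_mul]
  simp_rw [hterm]
  rw [Summable.tsum_finsetSum fun g _ => (hasSum_ite_eq _ _).summable]
  simp

theorem voterSurvival_eq_sum (t : ℕ) (η : V → ℕ) :
    voterSurvival G t η = ∑ g : V → V,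
      (crwMatrix G ^ t) id g * if ∀ v w, η (g v) = η (g w) then 0 else 1 := by
  calc voterSurvival G t η
      = ∑' η', voterProb G t η η' * if ∀ v w, η' v = η' w then 0 else 1 := by
        refine tsum_congr fun η' => ?_
        split_ifs <;> simp
    _ = _ := tsum_voterProb_mul G t η _

theorem voterSurvival_nonneg (t : ℕ) (η : V → ℕ) : 0 ≤ voterSurvival G t η := by
  rw [voterSurvival_eq_sum]
  exact Finset.sum_nonneg fun g _ => mul_nonneg (crwMatrix_pow_nonneg G t id g) (by positivity)

theorem voterSurvival_le_crwSurvival (t : ℕ) (η : V → ℕ) :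
    voterSurvival G t η ≤ crwSurvival G t := by
  rw [voterSurvival_eq_sum, crwSurvival]
  refine Finset.sum_le_sum fun g _ => ?_
  by_cases hg : ∀ v w, g v = g w
  · rw [if_pos hg, if_pos fun v w => by rw [hg v w], mul_zero]
  · rw [if_neg hg]
    exact mul_le_of_le_one_right (crwMatrix_pow_nonneg G t id g) (by split_ifs <;> norm_num)

theorem voterSurvival_eq_crwSurvival {η : V → ℕ} (hη : Function.Injective η) (t : ℕ) :
    voterSurvival G t η = crwSurvival G t := by
  rw [voterSurvival_eq_sum, crwSurvival]
  refine Finset.sum_congr rfl fun g _ => ?_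
  simp only [hη.eq_iff]
  split_ifs <;> simp

variable {μ : (V → ℕ) → ℝ}

theorem summable_mul_voterSurvival (hμ0 : ∀ η, 0 ≤ μ η) (hμ : Summable μ) (t : ℕ) :
    Summable fun η => μ η * voterSurvival G t η :=
  (hμ.mul_right (crwSurvival G t)).of_nonneg_of_le
    (fun η => mul_nonneg (hμ0 η) (voterSurvival_nonneg G t η))
    (fun η => mul_le_mul_of_nonneg_left (voterSurvival_le_crwSurvival G t η) (hμ0 η))

theorem tsum_mul_voterSurvival_le (hμ0 : ∀ η, 0 ≤ μ η) (hμ : Summable μ)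
    (hμ1 : ∑' η, μ η = 1) (t : ℕ) : ∑' η, μ η * voterSurvival G t η ≤ crwSurvival G t :=
  calc ∑' η, μ η * voterSurvival G t η
      ≤ ∑' η, μ η * crwSurvival G t :=
        (summable_mul_voterSurvival G hμ0 hμ t).tsum_le_tsum
          (fun η => mul_le_mul_of_nonneg_left (voterSurvival_le_crwSurvival G t η) (hμ0 η))
          (hμ.mul_right _)
    _ = crwSurvival G t := by rw [tsum_mul_right, hμ1, one_mul]

theorem mul_crwSurvival_le_tsum (hμ0 : ∀ η, 0 ≤ μ η) (hμ : Summable μ) {η₀ : V → ℕ}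
    (hη₀ : Function.Injective η₀) (t : ℕ) :
    μ η₀ * crwSurvival G t ≤ ∑' η, μ η * voterSurvival G t η := by
  rw [← voterSurvival_eq_crwSurvival G hη₀]
  exact (summable_mul_voterSurvival G hμ0 hμ t).le_tsum η₀
    fun η _ => mul_nonneg (hμ0 η) (voterSurvival_nonneg G t η)

end VoterModel

open VoterModel CoalescingRandomWalks

theorem voter_rate_le_crw_rate (G : SimpleGraph V) [DecidableRel G.Adj]
    (μ : (V → ℕ) → ℝ) (hμ0 : ∀ η, 0 ≤ μ η) (hμ1 : ∑' η : V → ℕ, μ η = 1)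
    (lamV lamCRW : ℝ)
    (hV : Tendsto (fun t : ℕ =>
        (∑' η : V → ℕ, μ η * voterSurvival G t η) ^ ((1 : ℝ) / t)) atTop (𝓝 lamV))
    (hC : Tendsto (fun n : ℕ => crwSurvival G n ^ ((1 : ℝ) / n)) atTop (𝓝 lamCRW)) :
    lamV ≤ lamCRW ∧
    ((∃ η : V → ℕ, 0 < μ η ∧ Function.Injective η) → lamV = lamCRW) := by
  have hμ : Summable μ := by
    by_contra h
    simp [tsum_eq_zero_of_not_summable h] at hμ1
  have hle : lamV ≤ lamCRW :=
    le_of_tendsto_rpow_one_div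
      (fun t => tsum_nonneg fun η => mul_nonneg (hμ0 η) (voterSurvival_nonneg G t η))
      (tsum_mul_voterSurvival_le G hμ0 hμ hμ1) hV hC
  refine ⟨hle, fun ⟨η₀, hpos, hη₀⟩ => hle.antisymm ?_⟩
  exact le_of_tendsto_rpow_one_div (fun t => mul_nonneg hpos.le (crwSurvival_nonneg G t))
    (mul_crwSurvival_le_tsum G hμ0 hμ hη₀)
    (tendsto_const_mul_rpow_one_div hpos (crwSurvival_nonneg G) hC) hV
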